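/- The relation ∼ on arrows of Δ/C is generated by the elementary relation ≈, where a_* ≈ b_* : x → x' iff there exists an index i₀ such that a(i) = b(i) for all i ≠ i₀ and x'(min(a(i₀),b(i₀)) → max(a(i₀),b(i₀))) is an identity. -/

import Mathlib

open CategoryTheory

/-- An arrow in a category "is an identity" if its source and target coincide and it is
the identity of that object. -/
def IsIdArrow {C : Type*} [Category C] {X Y : C} (f : X ⟶ Y) : Prop :=
  ∃ h : X = Y, f = eqToHom h

/-- The relation `∼` of the paper on parallel maps of chains `a_*, b_* : x → x'` in the
category of simplices `Δ/C`: `a_* ∼ b_*` iff `x'(min (a i) (b i) → max (a i) (b i))` is an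
identity for every `i`.  Here a chain (an `n`-simplex of the nerve of `C`) is a functor
`Fin (n+1) ⥤ C` from the finite ordinal `[n]`. -/
def SimRel {C : Type*} [Category C] {n n' : ℕ} (x' : Fin (n' + 1) ⥤ C)
    (a b : Fin (n + 1) →o Fin (n' + 1)) : Prop :=
  ∀ i : Fin (n + 1),
    IsIdArrow (x'.map (homOfLE (min_le_max : min (a i) (b i) ≤ max (a i) (b i))))

/-- `a : [n] → [n']` underlies an arrow of `Δ/C` from the chain `x` to the chain `x'`
precisely when `x' ∘ a = x`. -/
def ChainCompat {C : Type*} [Category C] {n n' : ℕ} (x : Fin (n + 1) ⥤ C)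
    (x' : Fin (n' + 1) ⥤ C) (a : Fin (n + 1) →o Fin (n' + 1)) : Prop :=
  a.monotone.functor ⋙ x' = x

/-- The arrows `x → x'` of the category of simplices `Δ/C`. -/
def ChainArrow {C : Type*} [Category C] {n n' : ℕ} (x : Fin (n + 1) ⥤ C)
    (x' : Fin (n' + 1) ⥤ C) : Type _ :=
  { a : Fin (n + 1) →o Fin (n' + 1) // ChainCompat x x' a }

/-- The elementary relation `≈` on parallel arrows of `Δ/C`: `a_* ≈ b_*` iff `a` and `b`
agree except possibly at one index `i₀`, where `x'(min (a i₀) (b i₀) → max (a i₀) (b i₀))`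
is an identity. -/
def ElemRel {C : Type*} [Category C] {n n' : ℕ} {x : Fin (n + 1) ⥤ C}
    {x' : Fin (n' + 1) ⥤ C} (a b : ChainArrow x x') : Prop :=
  ∃ i₀ : Fin (n + 1), (∀ i, i ≠ i₀ → a.1 i = b.1 i) ∧
    IsIdArrow (x'.map (homOfLE (min_le_max : min (a.1 i₀) (b.1 i₀) ≤ max (a.1 i₀) (b.1 i₀))))

/-!
Proof idea: the arrows of `C` that are identities are closed under composition and satisfy
two-out-of-three, so for a functor `F` out of a linear order, "`F` sends the arrow between
`min p q` and `max p q` to an identity" is an equivalence relation on objects. Hence `∼` is an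
equivalence relation containing `≈`. Conversely, if `a ∼ b` then `m = min a b` is again an
arrow `x → x'`: the comparison maps `x'(m i → a i)` are identities, so `x' ∘ m = x' ∘ a = x`.
Replacing the values of `a` by those of `m` one index at a time, from the bottom up, keeps the
map monotone (as `m ≤ a`) and each replacement is a `≈`-step; the same goes for `b`.
-/

namespace CategoryTheory

variable {C : Type*} [Category C]

section IsIdArrow

variable {X Y Z : C} {f : X ⟶ Y} {g : Y ⟶ Z}

lemma IsIdArrow.comp (hf : IsIdArrow f) (hg : IsIdArrow g) : IsIdArrow (f ≫ g) := by
  obtain ⟨rfl, rfl⟩ := hf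
  obtain ⟨rfl, rfl⟩ := hg
  exact ⟨rfl, by simp⟩

lemma IsIdArrow.of_comp_left (hf : IsIdArrow f) (hfg : IsIdArrow (f ≫ g)) : IsIdArrow g := by
  obtain ⟨rfl, rfl⟩ := hf
  simpa using hfg

lemma IsIdArrow.of_comp_right (hg : IsIdArrow g) (hfg : IsIdArrow (f ≫ g)) : IsIdArrow f := by
  obtain ⟨rfl, rfl⟩ := hg
  simpa using hfg

end IsIdArrow

section Preorder

variable {D : Type*} [Preorder D] (F : D ⥤ C)

lemma isIdArrow_map_homOfLE_congr {p q p' q' : D} (hp : p = p') (hq : q = q') (h : p ≤ q)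
    (h' : p' ≤ q') : IsIdArrow (F.map (homOfLE h)) ↔ IsIdArrow (F.map (homOfLE h')) := by
  subst hp hq
  rfl

lemma map_homOfLE_comp {p q r : D} (hpq : p ≤ q) (hqr : q ≤ r) :
    F.map (homOfLE hpq) ≫ F.map (homOfLE hqr) = F.map (homOfLE (hpq.trans hqr)) :=
  (F.map_comp _ _).symm

lemma _root_.OrderHom.functor_comp_eq_of_isIdArrow {ι : Type*} [Preorder ι] {f g : ι →o D}
    (hfg : f ≤ g) (h : ∀ i, IsIdArrow (F.map (homOfLE (hfg i)))) :
    f.monotone.functor ⋙ F = g.monotone.functor ⋙ F := by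
  let τ : f.monotone.functor ⟶ g.monotone.functor :=
    { app := fun i => homOfLE (hfg i), naturality := fun _ _ _ => Subsingleton.elim _ _ }
  have (i : ι) : IsIso ((Functor.whiskerRight τ F).app i) := by
    change IsIso (F.map (homOfLE (hfg i)))
    rw [(h i).2]
    infer_instance
  have := NatIso.isIso_of_isIso_app (Functor.whiskerRight τ F)
  exact Functor.ext_of_iso (asIso (Functor.whiskerRight τ F)) (fun i => (h i).1) fun i => (h i).2

end Preorder

section LinearOrder

variable {D : Type*} [LinearOrder D] (F : D ⥤ C)

/-- `SimRel x' a b` is definitionally `∀ i, x'.Collapses (a i) (b i)`. -/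
def Functor.Collapses (p q : D) : Prop :=
  IsIdArrow (F.map (homOfLE (min_le_max : min p q ≤ max p q)))

variable {F}

lemma Functor.collapses_iff_of_le {p q : D} (h : p ≤ q) :
    F.Collapses p q ↔ IsIdArrow (F.map (homOfLE h)) :=
  isIdArrow_map_homOfLE_congr F (min_eq_left h) (max_eq_right h) _ _

lemma Functor.collapses_comm (p q : D) : F.Collapses p q ↔ F.Collapses q p :=
  isIdArrow_map_homOfLE_congr F (min_comm p q) (max_comm p q) _ _

lemma Functor.collapses_refl (p : D) : F.Collapses p p :=
  (F.collapses_iff_of_le le_rfl).2 ⟨rfl, by simp⟩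

lemma Functor.Collapses.trans_of_le {p q r : D} (hpr : p ≤ r) (hpq : F.Collapses p q)
    (hqr : F.Collapses q r) : F.Collapses p r := by
  rw [F.collapses_iff_of_le hpr]
  rcases le_total q p with hqp | hpq'
  · rw [F.collapses_comm, F.collapses_iff_of_le hqp] at hpq
    rw [F.collapses_iff_of_le (hqp.trans hpr), ← map_homOfLE_comp F hqp hpr] at hqr
    exact hpq.of_comp_left hqr
  rcases le_total r q with hrq | hqr'
  · rw [F.collapses_comm, F.collapses_iff_of_le hrq] at hqr
    rw [F.collapses_iff_of_le (hpr.trans hrq), ← map_homOfLE_comp F hpr hrq] at hpq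
    exact hqr.of_comp_right hpq
  · rw [F.collapses_iff_of_le hpq'] at hpq
    rw [F.collapses_iff_of_le hqr'] at hqr
    exact map_homOfLE_comp F hpq' hqr' ▸ hpq.comp hqr

lemma Functor.collapses_equivalence : _root_.Equivalence F.Collapses where
  refl := F.collapses_refl
  symm := (F.collapses_comm _ _).1
  trans {p _ r} hpq hqr := by
    rcases le_total p r with h | h
    · exact hpq.trans_of_le h hqr
    · rw [F.collapses_comm] at hpq hqr ⊢
      exact hqr.trans_of_le h hpq

lemma Functor.Collapses.min_right {p q : D} (h : F.Collapses p q) :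
    F.Collapses p (min p q) := by
  rcases min_choice p q with hm | hm <;> rw [hm]
  exacts [F.collapses_refl p, h]

end LinearOrder

end CategoryTheory

def OrderHom.piecewiseOfLE {ι α : Type*} [Preorder ι] [Preorder α] (s : Set ι)
    [DecidablePred (· ∈ s)] (hs : IsLowerSet s) (f g : ι →o α) (hfg : f ≤ g) : ι →o α :=
  ⟨s.piecewise f g, fun i j hij => by
    by_cases hj : j ∈ s
    · simp only [Set.piecewise_eq_of_mem _ _ _ hj, Set.piecewise_eq_of_mem _ _ _ (hs hij hj)]
      exact f.monotone hij
    rw [Set.piecewise_eq_of_notMem _ _ _ hj]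
    by_cases hi : i ∈ s
    · rw [Set.piecewise_eq_of_mem _ _ _ hi]
      exact (hfg i).trans (g.monotone hij)
    · rw [Set.piecewise_eq_of_notMem _ _ _ hi]
      exact g.monotone hij⟩

lemma OrderHom.piecewiseOfLE_le {ι α : Type*} [Preorder ι] [Preorder α] (s : Set ι)
    [DecidablePred (· ∈ s)] (hs : IsLowerSet s) (f g : ι →o α) (hfg : f ≤ g) :
    piecewiseOfLE s hs f g hfg ≤ g := fun i => by
  by_cases hi : i ∈ s
  · exact (Set.piecewise_eq_of_mem s f g hi).trans_le (hfg i)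
  · exact (Set.piecewise_eq_of_notMem s f g hi).le

section Chains

variable {C : Type*} [Category C] {n n' : ℕ}

lemma simRel_equivalence (x' : Fin (n' + 1) ⥤ C) : Equivalence (SimRel (n := n) x') where
  refl _ _ := x'.collapses_refl _
  symm h i := x'.collapses_equivalence.symm (h i)
  trans h h' i := x'.collapses_equivalence.trans (h i) (h' i)

lemma SimRel.inf_right {x' : Fin (n' + 1) ⥤ C} {a b : Fin (n + 1) →o Fin (n' + 1)}
    (h : SimRel x' a b) : SimRel x' a (a ⊓ b) :=
  fun i => Functor.Collapses.min_right (h i)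

variable {x : Fin (n + 1) ⥤ C} {x' : Fin (n' + 1) ⥤ C}

lemma ChainCompat.of_le {a c : Fin (n + 1) →o Fin (n' + 1)} (ha : ChainCompat x x' a)
    (hca : c ≤ a) (h : SimRel x' a c) : ChainCompat x x' c :=
  (OrderHom.functor_comp_eq_of_isIdArrow x' hca fun i =>
    (x'.collapses_iff_of_le (hca i)).1 ((x'.collapses_comm _ _).1 (h i))).trans ha

lemma elemRel_le_simRel : ElemRel ≤ fun a b : ChainArrow x x' => SimRel x' a.1 b.1 := by
  rintro a b ⟨i₀, hne, hi₀⟩ i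
  by_cases hi : i = i₀
  · subst hi
    exact hi₀
  · change x'.Collapses (a.1 i) (b.1 i)
    rw [hne i hi]
    exact x'.collapses_refl _

lemma simRel_piecewiseOfLE (s : Set (Fin (n + 1))) [DecidablePred (· ∈ s)]
    (hs : IsLowerSet s) {a c : Fin (n + 1) →o Fin (n' + 1)} (hca : c ≤ a) (h : SimRel x' a c) :
    SimRel x' a (OrderHom.piecewiseOfLE s hs c a hca) := fun i => by
  by_cases hi : i ∈ s
  · change x'.Collapses _ (s.piecewise c a i)
    rw [Set.piecewise_eq_of_mem _ _ _ hi]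
    exact h i
  · change x'.Collapses _ (s.piecewise c a i)
    rw [Set.piecewise_eq_of_notMem _ _ _ hi]
    exact x'.collapses_refl _

namespace ChainArrow

def replaceBelow (a c : ChainArrow x x') (hca : c.1 ≤ a.1) (h : SimRel x' a.1 c.1) (k : ℕ) :
    ChainArrow x x' :=
  let hs : IsLowerSet {i : Fin (n + 1) | (i : ℕ) < k} :=
    fun _ _ hij hj => (Fin.le_def.1 hij).trans_lt hj
  ⟨OrderHom.piecewiseOfLE _ hs c.1 a.1 hca,
    a.2.of_le (OrderHom.piecewiseOfLE_le _ hs _ _ hca) (simRel_piecewiseOfLE _ hs hca h)⟩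

section

variable (a c : ChainArrow x x') (hca : c.1 ≤ a.1) (h : SimRel x' a.1 c.1)

lemma replaceBelow_apply (k : ℕ) (i : Fin (n + 1)) :
    (a.replaceBelow c hca h k).1 i = if (i : ℕ) < k then c.1 i else a.1 i :=
  rfl

lemma replaceBelow_zero : a.replaceBelow c hca h 0 = a :=
  Subtype.ext <| OrderHom.ext _ _ <| funext fun i => by simp [replaceBelow_apply]

lemma replaceBelow_of_le {k : ℕ} (hk : n + 1 ≤ k) : a.replaceBelow c hca h k = c :=
  Subtype.ext <| OrderHom.ext _ _ <| funext fun i => by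
    simp [replaceBelow_apply, i.isLt.trans_le hk]

lemma elemRel_replaceBelow_succ {k : ℕ} (hk : k < n + 1) :
    ElemRel (a.replaceBelow c hca h k) (a.replaceBelow c hca h (k + 1)) := by
  refine ⟨⟨k, hk⟩, fun i hi => ?_, ?_⟩
  · have : (i : ℕ) ≠ k := fun hik => hi (Fin.ext hik)
    simp only [replaceBelow_apply]
    split_ifs <;> first | rfl | omega
  · change x'.Collapses _ _
    rw [replaceBelow_apply, replaceBelow_apply, if_neg (lt_irrefl k), if_pos k.lt_succ_self]
    exact h _

end

lemma eqvGen_elemRel_of_le (a c : ChainArrow x x') (hca : c.1 ≤ a.1) (h : SimRel x' a.1 c.1) :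
    Relation.EqvGen ElemRel a c := by
  have steps : Relation.ReflTransGen
      (fun k l => ElemRel (a.replaceBelow c hca h k) (a.replaceBelow c hca h l)) 0 (n + 1) :=
    reflTransGen_of_succ_of_le _ (fun k hk => elemRel_replaceBelow_succ a c hca h hk.2)
      (Nat.zero_le _)
  have := Relation.EqvGen.reflTransGen_le_eqvGen _ _ _
    (steps.lift (a.replaceBelow c hca h) fun _ _ => id)
  rwa [replaceBelow_zero, replaceBelow_of_le a c hca h le_rfl] at this

end ChainArrow

end Chains

/-- the relation `∼` on arrows of `Δ/C` is the equivalence relation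
generated by the elementary relation `≈`. -/
theorem simRel_eq_eqvGen_elemRel {C : Type*} [Category C] {n n' : ℕ}
    (x : Fin (n + 1) ⥤ C) (x' : Fin (n' + 1) ⥤ C) (a b : ChainArrow x x') :
    SimRel x' a.1 b.1 ↔ Relation.EqvGen (ElemRel (x := x) (x' := x')) a b := by
  refine ⟨fun h => ?_, fun h => ?_⟩
  · have ham : SimRel x' a.1 (a.1 ⊓ b.1) := h.inf_right
    have hbm : SimRel x' b.1 (a.1 ⊓ b.1) :=
      inf_comm b.1 a.1 ▸ ((simRel_equivalence x').symm h).inf_right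
    let m : ChainArrow x x' := ⟨a.1 ⊓ b.1, a.2.of_le inf_le_left ham⟩
    exact (a.eqvGen_elemRel_of_le m inf_le_left ham).trans _ _ _
      (b.eqvGen_elemRel_of_le m inf_le_right hbm).symm
  · exact ((simRel_equivalence x').comap Subtype.val).eqvGen_iff.1 (h.mono elemRel_le_simRel)
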